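/- Let K and M be integers with 1 ≤ M ≤ K−1 and let λ_1 ≥ λ_2 ≥ ⋯ ≥ λ_K > 0 be real numbers. Define Γ₀ = min over i ∈ {K−M,…,K} of min{1, p({i}, {K−M,…,K}∖{i}) · p_W(1) / (p(1, {2,…,M+1}) · p_W(i))}, and define R_LB = [ (K−M) − (K − M − K/(M+1)) · Γ₀ · (p(1, {2,…,M+1}) / p_W(1)) · C(K−1, M) ]^{−1}, where K/(M+1) denotes the real quotient. Then R_LB ≤ (M+1)/K. -/

import Mathlib

/-- `lbar K lam T = Σ_{k ∈ {1,…,K} \ T} λ_k`. -/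
noncomputable def lbar (K : ℕ) (lam : ℕ → ℝ) (T : Finset ℕ) : ℝ :=
  ∑ k ∈ Finset.Icc 1 K \ T, lam k

/-- The joint pmf `p(w, s) = (1 / C(K,M)) · λ_w / λ_s̄`. -/
noncomputable def pjoint (K M : ℕ) (lam : ℕ → ℝ) (w : ℕ) (s : Finset ℕ) : ℝ :=
  (1 / (K.choose M : ℝ)) * (lam w / lbar K lam s)

/-- The marginal `p_W(w) = Σ_s p(w, s)`, summed over `M`-subsets of `{1,…,K} \ {w}`. -/
noncomputable def pW (K M : ℕ) (lam : ℕ → ℝ) (w : ℕ) : ℝ :=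
  ∑ s ∈ Finset.powersetCard M ((Finset.Icc 1 K).erase w), pjoint K M lam w s

/-- `Γ₀ = min_{i ∈ {K−M,…,K}} min{1, p(i, {K−M,…,K}∖{i}) · p_W(1) / (p(1, {2,…,M+1}) · p_W(i))}`. -/
noncomputable def gamma0 (K M : ℕ) (lam : ℕ → ℝ) : ℝ :=
  (Finset.Icc (K - M) K).inf' (Finset.nonempty_Icc.mpr (Nat.sub_le K M))
    (fun i => min 1
      (pjoint K M lam i ((Finset.Icc (K - M) K).erase i) * pW K M lam 1
        / (pjoint K M lam 1 (Finset.Icc 2 (M + 1)) * pW K M lam i)))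

/-- `Γ(w, s) = Γ₀ · p(1, {2,…,M+1}) · p_W(w) / (p(w, s) · p_W(1))`,
with an arbitrary constant `g0` in place of `Γ₀`. -/
noncomputable def gammaWS (K M : ℕ) (lam : ℕ → ℝ) (g0 : ℝ) (w : ℕ) (s : Finset ℕ) : ℝ :=
  g0 * pjoint K M lam 1 (Finset.Icc 2 (M + 1)) * pW K M lam w
    / (pjoint K M lam w s * pW K M lam 1)

/-- The lower bound `R_LB` on the capacity achieved by the RCS scheme. -/
noncomputable def RLB (K M : ℕ) (lam : ℕ → ℝ) : ℝ :=
  ((K : ℝ) - M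
    - ((K : ℝ) - M - (K : ℝ) / (M + 1)) * gamma0 K M lam
      * (pjoint K M lam 1 (Finset.Icc 2 (M + 1)) / pW K M lam 1)
      * ((K - 1).choose M : ℝ))⁻¹

/-! Γ₀ is at most its `i = K` term, and by monotonicity of `λ` the set `{K−M,…,K−1}` maximises
`λ_s̄` among the `M`-subsets `s` of `{1,…,K−1}`, so `p(K, {K−M,…,K−1})` is the smallest summand
of `p_W(K)`. Hence `Γ₀ · p(1, {2,…,M+1}) / p_W(1) · C(K−1, M) ≤ 1`, and the bracket defining
`R_LB⁻¹` is at least `(K−M) − (K−M−K/(M+1)) = K/(M+1)`. -/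

open Finset

lemma Finset.sum_le_sum_of_card_eq_of_forall_le_sdiff {ι N : Type*} [DecidableEq ι]
    [AddCommMonoid N] [LinearOrder N] [IsOrderedAddMonoid N] {f : ι → N} {A B : Finset ι}
    (hcard : #A = #B) (hle : ∀ a ∈ A \ B, ∀ b ∈ B \ A, f a ≤ f b) :
    ∑ a ∈ A, f a ≤ ∑ b ∈ B, f b := by
  have hcard' : #(A \ B) = #(B \ A) := card_sdiff_comm hcard
  have hdiff : ∑ a ∈ A \ B, f a ≤ ∑ b ∈ B \ A, f b := by
    rcases (B \ A).eq_empty_or_nonempty with hBA | hBA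
    · rw [hBA, card_empty, card_eq_zero] at hcard'
      simp [hBA, hcard']
    calc ∑ a ∈ A \ B, f a ≤ #(A \ B) • (B \ A).inf' hBA f :=
          sum_le_card_nsmul _ _ _ fun a ha => le_inf' hBA _ fun b hb => hle a ha b hb
      _ = #(B \ A) • (B \ A).inf' hBA f := by rw [hcard']
      _ ≤ ∑ b ∈ B \ A, f b := card_nsmul_le_sum _ _ _ fun b hb => inf'_le f hb
  rw [← sum_inter_add_sum_sdiff A B, ← sum_inter_add_sum_sdiff B A, inter_comm B A]
  exact add_le_add le_rfl hdiff

section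

variable {K M : ℕ} {lam : ℕ → ℝ}

lemma lbar_pos (hpos : ∀ i, 1 ≤ i → i ≤ K → 0 < lam i) {w : ℕ} (hw : w ∈ Icc 1 K)
    {s : Finset ℕ} (hws : w ∉ s) : 0 < lbar K lam s := by
  refine sum_pos' (fun i hi => ?_) ⟨w, mem_sdiff.mpr ⟨hw, hws⟩, ?_⟩
  · obtain ⟨hi, -⟩ := mem_sdiff.mp hi
    exact (hpos i (mem_Icc.mp hi).1 (mem_Icc.mp hi).2).le
  · exact hpos w (mem_Icc.mp hw).1 (mem_Icc.mp hw).2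

lemma pjoint_pos (hMK : M ≤ K) (hpos : ∀ i, 1 ≤ i → i ≤ K → 0 < lam i) {w : ℕ}
    (hw : w ∈ Icc 1 K) {s : Finset ℕ} (hws : w ∉ s) : 0 < pjoint K M lam w s := by
  have hlbar := lbar_pos hpos hw hws
  have hchoose : 0 < (K.choose M : ℝ) := by exact_mod_cast Nat.choose_pos hMK
  have hlam := hpos w (mem_Icc.mp hw).1 (mem_Icc.mp hw).2
  unfold pjoint
  positivity

lemma pW_pos (hMK : M + 1 ≤ K) (hpos : ∀ i, 1 ≤ i → i ≤ K → 0 < lam i) {w : ℕ}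
    (hw : w ∈ Icc 1 K) : 0 < pW K M lam w := by
  refine sum_pos (fun s hs => pjoint_pos (by omega) hpos hw fun hws => ?_) ?_
  · exact (mem_erase.mp ((mem_powersetCard.mp hs).1 hws)).1 rfl
  · rw [powersetCard_nonempty, card_erase_of_mem hw, Nat.card_Icc]
    omega

lemma lbar_eq_sub {s : Finset ℕ} (hs : s ⊆ Icc 1 K) :
    lbar K lam s = ∑ k ∈ Icc 1 K, lam k - ∑ k ∈ s, lam k :=
  sum_sdiff_eq_sub hs

lemma lbar_le_lbar_Icc (hMK : M + 1 ≤ K) (hanti : AntitoneOn lam (Set.Icc 1 K))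
    {s : Finset ℕ} (hs : s ∈ powersetCard M ((Icc 1 K).erase K)) :
    lbar K lam s ≤ lbar K lam (Icc (K - M) (K - 1)) := by
  obtain ⟨hsub, hcard⟩ := mem_powersetCard.mp hs
  have hsK : ∀ b ∈ s, 1 ≤ b ∧ b ≤ K - 1 := fun b hb => by
    obtain ⟨hbK, hb⟩ := mem_erase.mp (hsub hb)
    obtain ⟨hb1, hbK'⟩ := mem_Icc.mp hb
    omega
  have hs : s ⊆ Icc 1 K := hsub.trans (erase_subset _ _)
  have hI : Icc (K - M) (K - 1) ⊆ Icc 1 K := Icc_subset_Icc (by omega) (by omega)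
  rw [lbar_eq_sub hs, lbar_eq_sub hI]
  refine sub_le_sub_left (sum_le_sum_of_card_eq_of_forall_le_sdiff ?_ fun a ha b hb => ?_) _
  · rw [Nat.card_Icc, hcard]
    omega
  · obtain ⟨ha, -⟩ := mem_sdiff.mp ha
    obtain ⟨hbs, hbI⟩ := mem_sdiff.mp hb
    have ha := mem_Icc.mp ha
    have hb := hsK b hbs
    have hba : b < K - M := by
      by_contra! h
      exact hbI (mem_Icc.mpr ⟨h, hb.2⟩)
    exact hanti ⟨hb.1, by omega⟩ ⟨by omega, by omega⟩ (by omega)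

lemma choose_mul_pjoint_le_pW (hMK : M + 1 ≤ K) (hanti : AntitoneOn lam (Set.Icc 1 K))
    (hpos : ∀ i, 1 ≤ i → i ≤ K → 0 < lam i) :
    ((K - 1).choose M : ℝ) * pjoint K M lam K (Icc (K - M) (K - 1)) ≤ pW K M lam K := by
  have hK : K ∈ Icc 1 K := mem_Icc.mpr ⟨by omega, le_rfl⟩
  have hcard : #(powersetCard M ((Icc 1 K).erase K)) = (K - 1).choose M := by
    rw [card_powersetCard, card_erase_of_mem hK, Nat.card_Icc, Nat.add_sub_cancel]
  rw [← hcard, ← nsmul_eq_mul]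
  refine card_nsmul_le_sum _ _ _ fun s hs => ?_
  have hKs : K ∉ s := fun h => (mem_erase.mp ((mem_powersetCard.mp hs).1 h)).1 rfl
  unfold pjoint
  gcongr
  · exact (hpos K (by omega) le_rfl).le
  · exact lbar_pos hpos hK hKs
  · exact lbar_le_lbar_Icc hMK hanti hs

lemma gamma0_le_of_mem {i : ℕ} (hi : i ∈ Icc (K - M) K) :
    gamma0 K M lam ≤ pjoint K M lam i ((Icc (K - M) K).erase i) * pW K M lam 1
      / (pjoint K M lam 1 (Icc 2 (M + 1)) * pW K M lam i) :=
  (inf'_le _ hi).trans (min_le_right _ _)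

lemma gamma0_mul_le_one (hMK : M + 1 ≤ K)
    (hanti : AntitoneOn lam (Set.Icc 1 K)) (hpos : ∀ i, 1 ≤ i → i ≤ K → 0 < lam i) :
    gamma0 K M lam * (pjoint K M lam 1 (Icc 2 (M + 1)) / pW K M lam 1)
      * ((K - 1).choose M : ℝ) ≤ 1 := by
  have h1 : 1 ∈ Icc 1 K := mem_Icc.mpr ⟨le_rfl, by omega⟩
  have hK : K ∈ Icc 1 K := mem_Icc.mpr ⟨by omega, le_rfl⟩
  have hp1 := pjoint_pos (M := M) (by omega) hpos h1 (s := Icc 2 (M + 1)) (by simp)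
  have hW1 := pW_pos hMK hpos h1
  have hWK := pW_pos hMK hpos hK
  have hsK : (Icc (K - M) K).erase K = Icc (K - M) (K - 1) := by
    ext x
    simp only [mem_erase, mem_Icc]
    omega
  have hγ := gamma0_le_of_mem (lam := lam) (M := M) (i := K) (mem_Icc.mpr ⟨by omega, le_rfl⟩)
  rw [hsK] at hγ
  calc gamma0 K M lam * (pjoint K M lam 1 (Icc 2 (M + 1)) / pW K M lam 1)
        * ((K - 1).choose M : ℝ)
      ≤ pjoint K M lam K (Icc (K - M) (K - 1)) * pW K M lam 1
          / (pjoint K M lam 1 (Icc 2 (M + 1)) * pW K M lam K)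
          * (pjoint K M lam 1 (Icc 2 (M + 1)) / pW K M lam 1) * ((K - 1).choose M : ℝ) := by
        gcongr
    _ = ((K - 1).choose M : ℝ) * pjoint K M lam K (Icc (K - M) (K - 1)) / pW K M lam K := by
        field_simp
    _ ≤ 1 := (div_le_one hWK).mpr (choose_mul_pjoint_le_pW hMK hanti hpos)

end

lemma inv_sub_mul_le_of_le_one {K M : ℕ} (hMK : M + 1 ≤ K) {g r C : ℝ} (hX : g * r * C ≤ 1) :
    ((K : ℝ) - M - ((K : ℝ) - M - (K : ℝ) / (M + 1)) * g * r * C)⁻¹ ≤ ((M : ℝ) + 1) / K := by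
  have hKM : (M : ℝ) + 1 ≤ K := by exact_mod_cast hMK
  have hM1 : (0 : ℝ) < M + 1 := by positivity
  have hK : (0 : ℝ) < K := by linarith
  set c : ℝ := (K : ℝ) - M - (K : ℝ) / (M + 1) with hc_def
  have hc : 0 ≤ c := by
    rw [hc_def, sub_nonneg, div_le_iff₀ hM1]
    nlinarith
  have hcX : c * g * r * C ≤ c := by
    simpa only [mul_assoc, mul_one] using mul_le_mul_of_nonneg_left hX hc
  have hbound : (K : ℝ) / (M + 1) ≤ (K : ℝ) - M - c * g * r * C := by
    linarith
  exact (inv_anti₀ (by positivity) hbound).trans_eq (inv_div _ _)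

theorem stmt10_general {K M : ℕ} (hMK : M + 1 ≤ K) (lam : ℕ → ℝ)
    (hmono : ∀ i j, 1 ≤ i → i ≤ j → j ≤ K → lam j ≤ lam i)
    (hpos : ∀ i, 1 ≤ i → i ≤ K → 0 < lam i) :
    RLB K M lam ≤ ((M : ℝ) + 1) / K := by
  have hanti : AntitoneOn lam (Set.Icc 1 K) := fun i hi j hj hij => hmono i j hi.1 hij hj.2
  exact inv_sub_mul_le_of_le_one hMK (gamma0_mul_le_one hMK hanti hpos)

theorem stmt10 {K M : ℕ} (hM : 1 ≤ M) (hMK : M + 1 ≤ K) (lam : ℕ → ℝ)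
    (hmono : ∀ i j, 1 ≤ i → i ≤ j → j ≤ K → lam j ≤ lam i)
    (hpos : ∀ i, 1 ≤ i → i ≤ K → 0 < lam i) :
    RLB K M lam ≤ ((M : ℝ) + 1) / K :=
  stmt10_general hMK lam hmono hpos
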